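/- For every z ∈ ℂ, ∂(∂̄ q)(z) = 2·(1−|z|²)/(1+|z|²)³, where q : ℂ → ℂ is the function q(w) = (|w|²−1)/(|w|²+1) (coerced from ℝ to ℂ). (Equivalently, q is an eigenfunction of the Fubini–Study Laplacian: Δ_{ω_FS} q = −4q, since Δ_{ω_FS} = 2(1+|z|²)²·∂∂̄ in the coordinate z.) -/

import Mathlib

/-- The Wirtinger derivative `∂u`. -/
noncomputable def wdz (u : ℂ → ℂ) (z : ℂ) : ℂ :=
  (1 / 2) * (fderiv ℝ u z 1 - Complex.I • fderiv ℝ u z Complex.I)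

/-- The Wirtinger derivative `∂̄u`. -/
noncomputable def wdzbar (u : ℂ → ℂ) (z : ℂ) : ℂ :=
  (1 / 2) * (fderiv ℝ u z 1 + Complex.I • fderiv ℝ u z Complex.I)

/-! Both Wirtinger derivatives obey the Leibniz rule and, for real-valued functions, the chain
rule with a real function of one variable; moreover `∂̄|z|² = z` and `∂|z|² = z̄`. Writing
`q = φ(|z|²)` with `φ t = (t - 1)/(t + 1)`, `φ' t = 2/(t + 1)²`, this gives
`∂̄q = z · 2/(|z|² + 1)²`, and then
`∂∂̄q = 2/(|z|² + 1)² - 4|z|²/(|z|² + 1)³ = 2(1 - |z|²)/(1 + |z|²)³`. -/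

open Complex ComplexConjugate

theorem HasFDerivAt.ofReal_comp {E : Type*} [NormedAddCommGroup E] [NormedSpace ℝ E]
    {g : E → ℝ} {g' : E →L[ℝ] ℝ} {x : E} (hg : HasFDerivAt g g' x) :
    HasFDerivAt (fun y => (g y : ℂ)) (ofRealCLM.comp g') x :=
  ofRealCLM.hasFDerivAt.comp x hg

section Wirtinger

variable {z : ℂ}

lemma wdz_mul {u v : ℂ → ℂ} (hu : DifferentiableAt ℝ u z) (hv : DifferentiableAt ℝ v z) :
    wdz (fun w => u w * v w) z = wdz u z * v z + u z * wdz v z := by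
  simp only [wdz, fderiv_fun_mul hu hv, add_apply, smul_apply, smul_eq_mul]
  ring

lemma wdz_id : wdz (fun w => w) z = 1 := by
  norm_num [wdz]

lemma fderiv_ofReal_comp {g : ℂ → ℝ} {φ : ℝ → ℝ} {φ' : ℝ} (hg : DifferentiableAt ℝ g z)
    (hφ : HasDerivAt φ φ' (g z)) :
    fderiv ℝ (fun w => (φ (g w) : ℂ)) z = φ' • fderiv ℝ (fun w => (g w : ℂ)) z := by
  have hφg : HasFDerivAt (fun w => (φ (g w) : ℂ)) _ z :=
    (hφ.comp_hasFDerivAt z hg.hasFDerivAt).ofReal_comp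
  rw [hφg.fderiv, hg.hasFDerivAt.ofReal_comp.fderiv, ContinuousLinearMap.comp_smul]

lemma wdz_ofReal_comp {g : ℂ → ℝ} {φ : ℝ → ℝ} {φ' : ℝ} (hg : DifferentiableAt ℝ g z)
    (hφ : HasDerivAt φ φ' (g z)) :
    wdz (fun w => (φ (g w) : ℂ)) z = φ' * wdz (fun w => (g w : ℂ)) z := by
  simp only [wdz, fderiv_ofReal_comp hg hφ, smul_apply, real_smul]
  ring

lemma wdzbar_ofReal_comp {g : ℂ → ℝ} {φ : ℝ → ℝ} {φ' : ℝ} (hg : DifferentiableAt ℝ g z)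
    (hφ : HasDerivAt φ φ' (g z)) :
    wdzbar (fun w => (φ (g w) : ℂ)) z = φ' * wdzbar (fun w => (g w : ℂ)) z := by
  simp only [wdzbar, fderiv_ofReal_comp hg hφ, smul_apply, real_smul]
  ring

lemma fderiv_ofReal_norm_sq :
    fderiv ℝ (fun w : ℂ => ((‖w‖ ^ 2 : ℝ) : ℂ)) z = ofRealCLM.comp (2 • innerSL ℝ z) :=
  (hasStrictFDerivAt_norm_sq z).hasFDerivAt.ofReal_comp.fderiv

lemma wdz_ofReal_norm_sq : wdz (fun w => ((‖w‖ ^ 2 : ℝ) : ℂ)) z = conj z := by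
  simp only [wdz, fderiv_ofReal_norm_sq]
  apply Complex.ext <;> simp

lemma wdzbar_ofReal_norm_sq : wdzbar (fun w => ((‖w‖ ^ 2 : ℝ) : ℂ)) z = z := by
  simp only [wdzbar, fderiv_ofReal_norm_sq]
  apply Complex.ext <;> simp

end Wirtinger

lemma hasDerivAt_sub_one_div_add_one {t : ℝ} (ht : t + 1 ≠ 0) :
    HasDerivAt (fun s => (s - 1) / (s + 1)) (2 / (t + 1) ^ 2) t := by
  refine (((hasDerivAt_id' t).sub_const 1).fun_div ((hasDerivAt_id' t).add_const 1)
    ht).congr_deriv ?_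
  field_simp
  ring

lemma hasDerivAt_two_div_add_one_sq {t : ℝ} (ht : t + 1 ≠ 0) :
    HasDerivAt (fun s => 2 / (s + 1) ^ 2) (-4 / (t + 1) ^ 3) t := by
  refine ((hasDerivAt_const t (2 : ℝ)).fun_div (((hasDerivAt_id' t).add_const 1).fun_pow 2)
    (pow_ne_zero 2 ht)).congr_deriv ?_
  field_simp
  ring

lemma wdzbar_q (z : ℂ) :
    wdzbar (fun w : ℂ => (((‖w‖ ^ 2 - 1) / (‖w‖ ^ 2 + 1) : ℝ) : ℂ)) z
      = z * ((2 / (‖z‖ ^ 2 + 1) ^ 2 : ℝ) : ℂ) := by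
  rw [wdzbar_ofReal_comp (differentiableAt_fun_id.norm_sq ℝ)
    (hasDerivAt_sub_one_div_add_one (by positivity : ‖z‖ ^ 2 + 1 ≠ 0)),
    wdzbar_ofReal_norm_sq, mul_comm]

theorem laplacian_eigenfunction_q (z : ℂ) :
    wdz (fun w : ℂ => wdzbar (fun v : ℂ =>
        (((‖v‖ ^ 2 - 1) / (‖v‖ ^ 2 + 1) : ℝ) : ℂ)) w) z
      = 2 * (1 - (‖z‖ : ℂ) ^ 2) / (1 + (‖z‖ : ℂ) ^ 2) ^ 3 := by
  have hnorm_sq : DifferentiableAt ℝ (fun w : ℂ => ‖w‖ ^ 2) z := differentiableAt_fun_id.norm_sq ℝ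
  have hψ := hasDerivAt_two_div_add_one_sq (by positivity : ‖z‖ ^ 2 + 1 ≠ 0)
  have hψ_diff : DifferentiableAt ℝ (fun w : ℂ => ((2 / (‖w‖ ^ 2 + 1) ^ 2 : ℝ) : ℂ)) z :=
    (hψ.comp_hasFDerivAt (f := fun w : ℂ => ‖w‖ ^ 2) z hnorm_sq.hasFDerivAt).ofReal_comp
      |>.differentiableAt
  simp only [wdzbar_q]
  rw [wdz_mul differentiableAt_fun_id hψ_diff, wdz_id, wdz_ofReal_comp hnorm_sq hψ,
    wdz_ofReal_norm_sq, mul_left_comm, mul_conj', add_comm 1 ((‖z‖ : ℂ) ^ 2)]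
  have hden : (‖z‖ : ℂ) ^ 2 + 1 ≠ 0 := by exact_mod_cast (by positivity : ‖z‖ ^ 2 + 1 ≠ 0)
  push_cast
  field_simp
  ring
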